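/- arXiv:1304.7049 — 2 statements merged into one kernel-verified Lean document; each statement's English description precedes it below -/
import Mathlib

section
/- Let A ∈ ℂ^{m×n} with Moore–Penrose pseudoinverse A†, and let X ∈ ℂ^{m×n} satisfy the null-space constraints: the null space of A is contained in the null space of X and the null space of A* is contained in the null space of X*. Then every nonzero eigenvalue λ ∈ ℂ of X A† (i.e., λ ≠ 0 such that (X A†) w = λ w for some nonzero w ∈ ℂ^m), and likewise every nonzero eigenvalue of A† X, satisfies |λ − 1| ≤ √(2 J(X;A)). -/
open scoped Matrix

/-- `B` is the Moore–Penrose pseudoinverse of `A`. -/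
def IsMPInv {m n : ℕ} (A : Matrix (Fin m) (Fin n) ℂ) (B : Matrix (Fin n) (Fin m) ℂ) : Prop :=
  A * B * A = A ∧ B * A * B = B ∧ (A * B)ᴴ = A * B ∧ (B * A)ᴴ = B * A

/-- Squared Frobenius norm. -/
noncomputable def frobSq {m n : ℕ} (M : Matrix (Fin m) (Fin n) ℂ) : ℝ :=
  ∑ i, ∑ j, ‖M i j‖ ^ 2

/-- The misfit functional `J(X;A) = ½‖(X-A)A†‖_F² + ½‖A†(X-A)‖_F²`,
with the pseudoinverse `Ad` of `A` given explicitly. -/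
noncomputable def Jmis {m n : ℕ} (X A : Matrix (Fin m) (Fin n) ℂ)
    (Ad : Matrix (Fin n) (Fin m) ℂ) : ℝ :=
  (1 / 2) * frobSq ((X - A) * Ad) + (1 / 2) * frobSq (Ad * (X - A))

lemma frobSq_nonneg {m n : ℕ} (M : Matrix (Fin m) (Fin n) ℂ) : 0 ≤ frobSq M :=
  Finset.sum_nonneg fun _ _ => Finset.sum_nonneg fun _ _ => sq_nonneg _

lemma eq_zero_of_mulVec {a b : ℕ} (M : Matrix (Fin a) (Fin b) ℂ)
    (h : ∀ u, M.mulVec u = 0) : M = 0 := by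
  ext i j
  have := congrFun (h (Pi.single j 1)) i
  simpa [Matrix.mulVec, dotProduct, Pi.single_apply] using this

lemma key {k : ℕ} (B : Matrix (Fin k) (Fin k) ℂ) {μ : ℂ} {w : Fin k → ℂ} (hw : w ≠ 0)
    (h : B.mulVec w = μ • w) : ‖μ‖ ^ 2 ≤ frobSq B := by
  set S := ∑ j, ‖w j‖ ^ 2 with hS
  have hS0 : 0 < S := by
    obtain ⟨j, hj⟩ := Function.ne_iff.mp hw
    refine Finset.sum_pos' (fun i _ => sq_nonneg _) ⟨j, Finset.mem_univ j, pow_pos (norm_pos_iff.mpr hj) 2⟩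
  have h1 : ∀ i, ‖(B.mulVec w) i‖ ^ 2 ≤ (∑ j, ‖B i j‖ ^ 2) * S := by
    intro i
    have hb : ‖(B.mulVec w) i‖ ≤ ∑ j, ‖B i j‖ * ‖w j‖ := by
      have := norm_sum_le (Finset.univ : Finset (Fin k)) (fun j => B i j * w j)
      simpa [Matrix.mulVec, dotProduct, norm_mul] using this
    calc ‖(B.mulVec w) i‖ ^ 2 ≤ (∑ j, ‖B i j‖ * ‖w j‖) ^ 2 :=
          pow_le_pow_left₀ (norm_nonneg _) hb 2
      _ ≤ (∑ j, ‖B i j‖ ^ 2) * S :=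
          Finset.sum_mul_sq_le_sq_mul_sq _ _ _
  have hmain : ‖μ‖ ^ 2 * S ≤ frobSq B * S := by
    have hLHS : ∑ i, ‖(B.mulVec w) i‖ ^ 2 = ‖μ‖ ^ 2 * S := by
      rw [h]
      simp [norm_smul, mul_pow, Finset.mul_sum, hS]
    calc ‖μ‖ ^ 2 * S = ∑ i, ‖(B.mulVec w) i‖ ^ 2 := hLHS.symm
      _ ≤ ∑ i, (∑ j, ‖B i j‖ ^ 2) * S := Finset.sum_le_sum fun i _ => h1 i
      _ = frobSq B * S := by rw [frobSq, Finset.sum_mul]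
  exact le_of_mul_le_mul_right hmain hS0

lemma key' {k m n : ℕ} (X A : Matrix (Fin m) (Fin n) ℂ) (Ad : Matrix (Fin n) (Fin m) ℂ)
    (B : Matrix (Fin k) (Fin k) ℂ) {μ : ℂ} {w : Fin k → ℂ} (hw : w ≠ 0)
    (h : B.mulVec w = μ • w)
    (hB : frobSq B ≤ 2 * Jmis X A Ad) : ‖μ‖ ≤ Real.sqrt (2 * Jmis X A Ad) := by
  have h1 : ‖μ‖ ^ 2 ≤ frobSq B := key B hw h
  calc ‖μ‖ = Real.sqrt (‖μ‖ ^ 2) := by rw [Real.sqrt_sq (norm_nonneg _)]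
    _ ≤ Real.sqrt (2 * Jmis X A Ad) := Real.sqrt_le_sqrt (h1.trans hB)

/-- if `X` satisfies the null-space constraints, then every nonzero
eigenvalue `λ` of `X A†`, and every nonzero eigenvalue of `A† X`, satisfies
`|λ - 1| ≤ √(2 J(X;A))`. -/
theorem stmt11 {m n : ℕ} (A X : Matrix (Fin m) (Fin n) ℂ) (Ad : Matrix (Fin n) (Fin m) ℂ)
    (hMP : IsMPInv A Ad)
    (hR : ∀ v : Fin n → ℂ, A.mulVec v = 0 → X.mulVec v = 0)
    (hL : ∀ v : Fin m → ℂ, Aᴴ.mulVec v = 0 → Xᴴ.mulVec v = 0) :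
    (∀ lam : ℂ, lam ≠ 0 →
      (∃ w : Fin m → ℂ, w ≠ 0 ∧ (X * Ad).mulVec w = lam • w) →
      ‖lam - 1‖ ≤ Real.sqrt (2 * Jmis X A Ad)) ∧
    (∀ lam : ℂ, lam ≠ 0 →
      (∃ w : Fin n → ℂ, w ≠ 0 ∧ (Ad * X).mulVec w = lam • w) →
      ‖lam - 1‖ ≤ Real.sqrt (2 * Jmis X A Ad)) := by
  obtain ⟨h1, h2, h3, h4⟩ := hMP
  -- X = X * Ad * A
  have hXr : X * (Ad * A) = X := by
    have hz : X * (1 - Ad * A) = 0 := by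
      apply eq_zero_of_mulVec
      intro u
      have hz1 : A * (1 - Ad * A) = 0 := by
        rw [Matrix.mul_sub, Matrix.mul_one, ← Matrix.mul_assoc, h1, sub_self]
      have hA : A.mulVec ((1 - Ad * A).mulVec u) = 0 := by
        rw [Matrix.mulVec_mulVec, hz1, Matrix.zero_mulVec]
      have := hR _ hA
      rwa [Matrix.mulVec_mulVec] at this
    rw [Matrix.mul_sub, Matrix.mul_one] at hz
    exact (sub_eq_zero.mp hz).symm
  -- X = A * Ad * X
  have hXl : (A * Ad) * X = X := by
    have hz1 : Aᴴ * (1 - A * Ad) = 0 := by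
      have e : Aᴴ * (A * Ad) = Aᴴ := by
        conv_lhs => rw [← h3]
        have e1 := congrArg Matrix.conjTranspose h1
        rwa [Matrix.conjTranspose_mul] at e1
      rw [Matrix.mul_sub, Matrix.mul_one, e, sub_self]
    have hz : Xᴴ * (1 - A * Ad) = 0 := by
      apply eq_zero_of_mulVec
      intro u
      have hA : Aᴴ.mulVec ((1 - A * Ad).mulVec u) = 0 := by
        rw [Matrix.mulVec_mulVec, hz1, Matrix.zero_mulVec]
      have := hL _ hA
      rwa [Matrix.mulVec_mulVec] at this
    have hz' : (1 - A * Ad) * X = 0 := by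
      have := congrArg Matrix.conjTranspose hz
      rwa [Matrix.conjTranspose_mul, Matrix.conjTranspose_conjTranspose,
        Matrix.conjTranspose_sub, Matrix.conjTranspose_one, h3,
        Matrix.conjTranspose_zero] at this
    rw [Matrix.sub_mul, Matrix.one_mul] at hz'
    exact (sub_eq_zero.mp hz').symm
  constructor
  · rintro lam hlam ⟨w, hw, hev⟩
    -- A * Ad fixes w
    have hfix : (A * Ad).mulVec w = w := by
      have e : (A * Ad) * (X * Ad) = X * Ad := by
        rw [← Matrix.mul_assoc, hXl]
      have : (A * Ad).mulVec ((X * Ad).mulVec w) = (X * Ad).mulVec w := by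
        rw [Matrix.mulVec_mulVec, e]
      rw [hev, Matrix.mulVec_smul] at this
      exact smul_right_injective _ hlam this
    have hev' : ((X - A) * Ad).mulVec w = (lam - 1) • w := by
      rw [Matrix.sub_mul, Matrix.sub_mulVec, hev, hfix, sub_smul, one_smul]
    refine key' X A Ad _ hw hev' ?_
    have := frobSq_nonneg (Ad * (X - A))
    rw [Jmis]; linarith
  · rintro lam hlam ⟨w, hw, hev⟩
    have hfix : (Ad * A).mulVec w = w := by
      have e : (Ad * A) * (Ad * X) = Ad * X := by
        rw [← Matrix.mul_assoc, h2]
      have : (Ad * A).mulVec ((Ad * X).mulVec w) = (Ad * X).mulVec w := by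
        rw [Matrix.mulVec_mulVec, e]
      rw [hev, Matrix.mulVec_smul] at this
      exact smul_right_injective _ hlam this
    have hev' : (Ad * (X - A)).mulVec w = (lam - 1) • w := by
      rw [Matrix.mul_sub, Matrix.sub_mulVec, hev, hfix, sub_smul, one_smul]
    refine key' X A Ad _ hw hev' ?_
    have := frobSq_nonneg ((X - A) * Ad)
    rw [Jmis]; linarith
end

section
/- Let A ∈ ℂ^{m×n} with Moore–Penrose pseudoinverse A†, let S ⊆ {1,…,m}×{1,…,n} be a sparsity pattern, let α ∈ ℂ with |α| = 1, and let P ∈ ℂ^{n×n} and Q ∈ ℂ^{m×m} be complex permutation matrices with associated permutations π and ρ (so that P_{i,π(i)} and Q_{ρ(j),j} are the nonzero entries). Define f(Y) := α P Y* Q and the transformed pattern S' by: (i,j) ∈ S' iff the (i,j) entry of |P| Zᵀ |Q| is nonzero, where Z is the 0–1 indicator matrix of S and |·| is entry-wise modulus. If X minimizes J(·;A) over the feasible set F(A,S), then f(X) minimizes J(·;f(A)) over the feasible set F(f(A), S'). -/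
open scoped Matrix

/-- A complex permutation matrix: exactly one nonzero entry in each row and column,
each of modulus 1. -/
def IsComplexPerm {k : ℕ} (P : Matrix (Fin k) (Fin k) ℂ) : Prop :=
  ∃ (π : Equiv.Perm (Fin k)) (d : Fin k → ℂ),
    (∀ i, ‖d i‖ = 1) ∧ P = Matrix.of fun i j => if j = π i then d i else 0

/-- The feasible set `F(A,S)`: the null space of `A` is contained in that of `X`,
the null space of `A*` in that of `X*`, and `X` vanishes outside the pattern `S`. -/
def Feasible {m n : ℕ} (A X : Matrix (Fin m) (Fin n) ℂ) (S : Set (Fin m × Fin n)) : Prop :=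
  (∀ v : Fin n → ℂ, A.mulVec v = 0 → X.mulVec v = 0) ∧
  (∀ v : Fin m → ℂ, Aᴴ.mulVec v = 0 → Xᴴ.mulVec v = 0) ∧
  (∀ ij : Fin m × Fin n, ij ∉ S → X ij.1 ij.2 = 0)

/-- The 0–1 indicator matrix of a sparsity pattern. -/
noncomputable def patMat {m n : ℕ} (S : Set (Fin m × Fin n)) : Matrix (Fin m) (Fin n) ℝ :=
  Matrix.of fun i j => S.indicator (fun _ => (1 : ℝ)) (i, j)

/-- The transformed pattern: `(i,j) ∈ S'` iff the `(i,j)` entry of `|P| Zᵀ |Q|` is nonzero,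
where `Z` is the indicator matrix of `S`. -/
noncomputable def patTrans {m n : ℕ} (S : Set (Fin m × Fin n))
    (P : Matrix (Fin n) (Fin n) ℂ) (Q : Matrix (Fin m) (Fin m) ℂ) :
    Set (Fin n × Fin m) :=
  {ij | ((P.map fun z => (‖z‖ : ℝ)) * (patMat S)ᵀ * (Q.map fun z => (‖z‖ : ℝ)))
          ij.1 ij.2 ≠ 0}


def Pm {k : ℕ} {R : Type*} [Zero R] (σ : Equiv.Perm (Fin k)) (d : Fin k → R) :
    Matrix (Fin k) (Fin k) R := Matrix.of fun i j => if j = σ i then d i else 0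

variable {m n k p : ℕ}

lemma unit_mul_conj {z : ℂ} (hz : ‖z‖ = 1) : z * (starRingEnd ℂ) z = 1 := by
  rw [Complex.mul_conj, Complex.normSq_eq_norm_sq, hz]
  norm_num

lemma unit_conj_mul {z : ℂ} (hz : ‖z‖ = 1) : (starRingEnd ℂ) z * z = 1 := by
  rw [mul_comm]; exact unit_mul_conj hz

lemma Pm_mul_apply {R : Type*} [NonUnitalNonAssocSemiring R] (σ : Equiv.Perm (Fin k))
    (d : Fin k → R) (M : Matrix (Fin k) (Fin m) R) (i : Fin k) (j : Fin m) :
    (Pm σ d * M) i j = d i * M (σ i) j := by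
  rw [Matrix.mul_apply, Finset.sum_eq_single (σ i)]
  · simp [Pm]
  · intro b _ hb; simp [Pm, hb]
  · simp

lemma mul_Pm_apply {R : Type*} [NonUnitalNonAssocSemiring R] (σ : Equiv.Perm (Fin k))
    (d : Fin k → R) (M : Matrix (Fin m) (Fin k) R) (i : Fin m) (j : Fin k) :
    (M * Pm σ d) i j = M i (σ.symm j) * d (σ.symm j) := by
  rw [Matrix.mul_apply, Finset.sum_eq_single (σ.symm j)]
  · simp [Pm]
  · intro b _ hb
    have : j ≠ σ b := fun h => hb (by rw [h, Equiv.symm_apply_apply])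
    simp [Pm, this]
  · simp

lemma Pm_map {R S : Type*} [Zero R] [Zero S] (σ : Equiv.Perm (Fin k)) (d : Fin k → R)
    (f : R → S) (hf : f 0 = 0) : (Pm σ d).map f = Pm σ (fun i => f (d i)) := by
  ext i j; simp [Pm, Matrix.map_apply, apply_ite f, hf]

lemma Pm_hermT_mul {σ : Equiv.Perm (Fin k)} {d : Fin k → ℂ} (hd : ∀ i, ‖d i‖ = 1) :
    (Pm σ d)ᴴ * Pm σ d = 1 := by
  ext i j
  rw [Matrix.mul_apply, Finset.sum_eq_single (σ.symm i)]
  · by_cases h : j = i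
    · subst h
      simp [Pm, Matrix.conjTranspose_apply, Matrix.one_apply, unit_conj_mul (hd (σ.symm j))]
    · simp [Pm, Matrix.conjTranspose_apply, Matrix.one_apply, h, Ne.symm h]
  · intro b _ hb
    have : i ≠ σ b := fun h => hb (by rw [h, Equiv.symm_apply_apply])
    simp [Pm, Matrix.conjTranspose_apply, this]
  · simp

lemma Pm_mul_hermT {σ : Equiv.Perm (Fin k)} {d : Fin k → ℂ} (hd : ∀ i, ‖d i‖ = 1) :
    Pm σ d * (Pm σ d)ᴴ = 1 := by
  ext i j
  rw [Matrix.mul_apply, Finset.sum_eq_single (σ i)]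
  · by_cases h : j = i
    · subst h; simp [Pm, Matrix.conjTranspose_apply, Matrix.one_apply, unit_mul_conj (hd j)]
    · have : σ i ≠ σ j := fun hc => h (σ.injective hc).symm
      simp [Pm, Matrix.conjTranspose_apply, Matrix.one_apply, h, Ne.symm h, this]
  · intro b _ hb; simp [Pm, Matrix.conjTranspose_apply, hb]
  · simp

lemma Pm_cancel {σ : Equiv.Perm (Fin k)} {d : Fin k → ℂ} (hd : ∀ i, ‖d i‖ = 1)
    (M : Matrix (Fin k) (Fin p) ℂ) : Pm σ d * ((Pm σ d)ᴴ * M) = M := by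
  rw [← Matrix.mul_assoc, Pm_mul_hermT hd, Matrix.one_mul]

lemma Pm_cancel' {σ : Equiv.Perm (Fin k)} {d : Fin k → ℂ} (hd : ∀ i, ‖d i‖ = 1)
    (M : Matrix (Fin k) (Fin p) ℂ) : (Pm σ d)ᴴ * (Pm σ d * M) = M := by
  rw [← Matrix.mul_assoc, Pm_hermT_mul hd, Matrix.one_mul]

lemma Pm_mulVec_eq_zero {σ : Equiv.Perm (Fin k)} {d : Fin k → ℂ} (hd : ∀ i, ‖d i‖ = 1)
    {w : Fin k → ℂ} (h : (Pm σ d).mulVec w = 0) : w = 0 := by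
  have h2 := congrArg (fun v => (Pm σ d)ᴴ.mulVec v) h
  simpa [Matrix.mulVec_mulVec, Pm_hermT_mul hd] using h2

lemma PmT_mulVec_eq_zero {σ : Equiv.Perm (Fin k)} {d : Fin k → ℂ} (hd : ∀ i, ‖d i‖ = 1)
    {w : Fin k → ℂ} (h : (Pm σ d)ᴴ.mulVec w = 0) : w = 0 := by
  have h2 := congrArg (fun v => (Pm σ d).mulVec v) h
  simpa [Matrix.mulVec_mulVec, Pm_mul_hermT hd] using h2

lemma frobSq_conjTranspose (M : Matrix (Fin m) (Fin n) ℂ) : frobSq Mᴴ = frobSq M := by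
  rw [frobSq, Finset.sum_comm]
  simp [frobSq, Matrix.conjTranspose_apply]

lemma frobSq_Pm_mul {σ : Equiv.Perm (Fin m)} {d : Fin m → ℂ} (hd : ∀ i, ‖d i‖ = 1)
    (M : Matrix (Fin m) (Fin n) ℂ) : frobSq (Pm σ d * M) = frobSq M := by
  simp only [frobSq, Pm_mul_apply, norm_mul, hd, one_mul]
  exact Equiv.sum_comp σ (fun i => ∑ j, ‖M i j‖ ^ 2)

lemma frobSq_mul_Pm {σ : Equiv.Perm (Fin n)} {d : Fin n → ℂ} (hd : ∀ i, ‖d i‖ = 1)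
    (M : Matrix (Fin m) (Fin n) ℂ) : frobSq (M * Pm σ d) = frobSq M := by
  simp only [frobSq, mul_Pm_apply, norm_mul, hd, mul_one]
  refine Finset.sum_congr rfl fun i _ => ?_
  exact Equiv.sum_comp σ.symm (fun j => ‖M i j‖ ^ 2)

lemma mem_patTrans {σ : Equiv.Perm (Fin n)} {d : Fin n → ℂ} (hd : ∀ i, ‖d i‖ = 1)
    {τ : Equiv.Perm (Fin m)} {e : Fin m → ℂ} (he : ∀ i, ‖e i‖ = 1)
    (S : Set (Fin m × Fin n)) (i : Fin n) (j : Fin m) :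
    (i, j) ∈ patTrans S (Pm σ d) (Pm τ e) ↔ (τ.symm j, σ i) ∈ S := by
  have hentry : ((Pm σ d).map (fun z => (‖z‖ : ℝ)) * (patMat S)ᵀ
      * (Pm τ e).map (fun z => (‖z‖ : ℝ))) i j = patMat S (τ.symm j) (σ i) := by
    rw [Pm_map _ _ _ (by simp), Pm_map _ _ _ (by simp), mul_Pm_apply, Pm_mul_apply]
    simp [hd, he, Matrix.transpose_apply]
  have : (i, j) ∈ patTrans S (Pm σ d) (Pm τ e) ↔ patMat S (τ.symm j) (σ i) ≠ 0 := by
    rw [patTrans, Set.mem_setOf_eq, hentry]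
  rw [this]
  simp only [patMat, Matrix.of_apply, Set.indicator_apply_ne_zero, Function.support]
  constructor
  · exact fun h => h.1
  · exact fun h => ⟨h, by simp⟩

lemma feas_transform {σ : Equiv.Perm (Fin n)} {d : Fin n → ℂ} (hd : ∀ i, ‖d i‖ = 1)
    {τ : Equiv.Perm (Fin m)} {e : Fin m → ℂ} (he : ∀ i, ‖e i‖ = 1)
    {α : ℂ} (hα : ‖α‖ = 1) (A Y : Matrix (Fin m) (Fin n) ℂ) (S : Set (Fin m × Fin n))
    (hY : Feasible A Y S) :
    Feasible (α • (Pm σ d * Aᴴ * Pm τ e)) (α • (Pm σ d * Yᴴ * Pm τ e))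
      (patTrans S (Pm σ d) (Pm τ e)) := by
  obtain ⟨h1, h2, h3⟩ := hY
  have hα0 : α ≠ 0 := fun h => by simp [h] at hα
  refine ⟨fun v hv => ?_, fun v hv => ?_, fun ij hij => ?_⟩
  · have hv1 : (Pm σ d).mulVec (Aᴴ.mulVec ((Pm τ e).mulVec v)) = 0 := by
      have := hv
      rw [Matrix.smul_mulVec] at this
      have h0 := (smul_eq_zero.mp this).resolve_left hα0
      rw [Matrix.mulVec_mulVec, Matrix.mulVec_mulVec]
      exact h0
    have hv2 : Aᴴ.mulVec ((Pm τ e).mulVec v) = 0 := Pm_mulVec_eq_zero hd hv1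
    have hv3 := h2 _ hv2
    rw [Matrix.smul_mulVec, ← Matrix.mulVec_mulVec, ← Matrix.mulVec_mulVec, hv3]
    simp
  · have hAH : (α • (Pm σ d * Aᴴ * Pm τ e))ᴴ
        = (starRingEnd ℂ α) • ((Pm τ e)ᴴ * A * (Pm σ d)ᴴ) := by
      simp [Matrix.conjTranspose_smul, Matrix.conjTranspose_mul, Matrix.mul_assoc]
    have hα0' : (starRingEnd ℂ α) ≠ 0 := by simpa using hα0
    have hv1 : (Pm τ e)ᴴ.mulVec (A.mulVec ((Pm σ d)ᴴ.mulVec v)) = 0 := by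
      rw [hAH, Matrix.smul_mulVec] at hv
      have h0 := (smul_eq_zero.mp hv).resolve_left hα0'
      rw [Matrix.mulVec_mulVec, Matrix.mulVec_mulVec]
      exact h0
    have hv2 : A.mulVec ((Pm σ d)ᴴ.mulVec v) = 0 := PmT_mulVec_eq_zero he hv1
    have hv3 := h1 _ hv2
    have hYH : (α • (Pm σ d * Yᴴ * Pm τ e))ᴴ
        = (starRingEnd ℂ α) • ((Pm τ e)ᴴ * Y * (Pm σ d)ᴴ) := by
      simp [Matrix.conjTranspose_smul, Matrix.conjTranspose_mul, Matrix.mul_assoc]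
    rw [hYH, Matrix.smul_mulVec, ← Matrix.mulVec_mulVec, ← Matrix.mulVec_mulVec, hv3]
    simp
  · obtain ⟨i, j⟩ := ij
    rw [mem_patTrans hd he] at hij
    have h0 : Y (τ.symm j) (σ i) = 0 := h3 _ hij
    have : (Pm σ d * Yᴴ * Pm τ e) i j = 0 := by
      rw [mul_Pm_apply, Pm_mul_apply, Matrix.conjTranspose_apply, h0]
      simp
    simp [this]

lemma mpinv_unique {A : Matrix (Fin m) (Fin n) ℂ} {B C : Matrix (Fin n) (Fin m) ℂ}
    (hB : IsMPInv A B) (hC : IsMPInv A C) : B = C := by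
  obtain ⟨b1, b2, b3, b4⟩ := hB
  obtain ⟨c1, c2, c3, c4⟩ := hC
  have e1 : (A * C) * (A * B) = A * B := by rw [← Matrix.mul_assoc, c1]
  have e2 : (A * B) * (A * C) = A * C := by rw [← Matrix.mul_assoc, b1]
  have e3 : (B * A) * (C * A) = B * A := by
    rw [← Matrix.mul_assoc, Matrix.mul_assoc B A C, Matrix.mul_assoc B (A * C) A, c1]
  have e4 : (C * A) * (B * A) = C * A := by
    rw [← Matrix.mul_assoc, Matrix.mul_assoc C A B, Matrix.mul_assoc C (A * B) A, b1]
  have hAB : A * B = A * C := by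
    calc A * B = (A * C) * (A * B) := e1.symm
    _ = (A * C)ᴴ * (A * B)ᴴ := by rw [c3, b3]
    _ = ((A * B) * (A * C))ᴴ := (Matrix.conjTranspose_mul (A * B) (A * C)).symm
    _ = (A * C)ᴴ := by rw [e2]
    _ = A * C := c3
  have hBA : B * A = C * A := by
    calc B * A = (B * A) * (C * A) := e3.symm
    _ = (B * A)ᴴ * (C * A)ᴴ := by rw [b4, c4]
    _ = ((C * A) * (B * A))ᴴ := (Matrix.conjTranspose_mul (C * A) (B * A)).symm
    _ = (C * A)ᴴ := by rw [e4]
    _ = C * A := c4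
  calc B = B * A * B := b2.symm
  _ = B * (A * C) := by rw [Matrix.mul_assoc, hAB]
  _ = (B * A) * C := by rw [← Matrix.mul_assoc]
  _ = (C * A) * C := by rw [hBA]
  _ = C := c2

lemma frobSq_mul_PmT {σ : Equiv.Perm (Fin n)} {d : Fin n → ℂ} (hd : ∀ i, ‖d i‖ = 1)
    (M : Matrix (Fin m) (Fin n) ℂ) : frobSq (M * (Pm σ d)ᴴ) = frobSq M := by
  rw [← frobSq_conjTranspose (M * (Pm σ d)ᴴ), Matrix.conjTranspose_mul,
    Matrix.conjTranspose_conjTranspose, frobSq_Pm_mul hd, frobSq_conjTranspose]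

lemma frobSq_PmT_mul {σ : Equiv.Perm (Fin m)} {d : Fin m → ℂ} (hd : ∀ i, ‖d i‖ = 1)
    (M : Matrix (Fin m) (Fin n) ℂ) : frobSq ((Pm σ d)ᴴ * M) = frobSq M := by
  rw [← frobSq_conjTranspose ((Pm σ d)ᴴ * M), Matrix.conjTranspose_mul,
    Matrix.conjTranspose_conjTranspose, frobSq_mul_Pm hd, frobSq_conjTranspose]

variable {σ : Equiv.Perm (Fin n)} {d : Fin n → ℂ} {τ : Equiv.Perm (Fin m)} {e : Fin m → ℂ}
  {α : ℂ}

lemma sandwich_mul (hα : ‖α‖ = 1) (he : ∀ i, ‖e i‖ = 1)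
    (W : Matrix (Fin n) (Fin m) ℂ) (V : Matrix (Fin m) (Fin n) ℂ) :
    (α • (Pm σ d * W * Pm τ e)) * ((starRingEnd ℂ α) • ((Pm τ e)ᴴ * V * (Pm σ d)ᴴ))
      = Pm σ d * (W * V) * (Pm σ d)ᴴ := by
  rw [Matrix.smul_mul, Matrix.mul_smul, smul_smul, unit_mul_conj hα, one_smul]
  simp only [Matrix.mul_assoc]
  rw [Pm_cancel he]

lemma sandwich_mul' (hα : ‖α‖ = 1) (hd : ∀ i, ‖d i‖ = 1)
    (W : Matrix (Fin n) (Fin m) ℂ) (V : Matrix (Fin m) (Fin n) ℂ) :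
    ((starRingEnd ℂ α) • ((Pm τ e)ᴴ * V * (Pm σ d)ᴴ)) * (α • (Pm σ d * W * Pm τ e))
      = (Pm τ e)ᴴ * (V * W) * Pm τ e := by
  rw [Matrix.smul_mul, Matrix.mul_smul, smul_smul, unit_conj_mul hα, one_smul]
  simp only [Matrix.mul_assoc]
  rw [Pm_cancel' hd]

lemma mp_transform {A : Matrix (Fin m) (Fin n) ℂ} {Ad : Matrix (Fin n) (Fin m) ℂ}
    (hMP : IsMPInv A Ad) (hd : ∀ i, ‖d i‖ = 1) (he : ∀ i, ‖e i‖ = 1) (hα : ‖α‖ = 1) :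
    IsMPInv (α • (Pm σ d * Aᴴ * Pm τ e))
      ((starRingEnd ℂ α) • ((Pm τ e)ᴴ * Adᴴ * (Pm σ d)ᴴ)) := by
  obtain ⟨h1, h2, h3, h4⟩ := hMP
  have t4 : Aᴴ * Adᴴ = Ad * A := (Matrix.conjTranspose_mul Ad A).symm.trans h4
  have t3 : Adᴴ * Aᴴ = A * Ad := (Matrix.conjTranspose_mul A Ad).symm.trans h3
  have f1 : Ad * A * Aᴴ = Aᴴ := by
    calc Ad * A * Aᴴ = (Ad * A)ᴴ * Aᴴ := by rw [h4]
    _ = (A * (Ad * A))ᴴ := (Matrix.conjTranspose_mul A (Ad * A)).symm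
    _ = Aᴴ := by rw [← Matrix.mul_assoc, h1]
  have f2 : A * Ad * Adᴴ = Adᴴ := by
    calc A * Ad * Adᴴ = (A * Ad)ᴴ * Adᴴ := by rw [h3]
    _ = (Ad * (A * Ad))ᴴ := (Matrix.conjTranspose_mul Ad (A * Ad)).symm
    _ = Adᴴ := by rw [← Matrix.mul_assoc, h2]
  have hMB : (α • (Pm σ d * Aᴴ * Pm τ e)) * ((starRingEnd ℂ α) • ((Pm τ e)ᴴ * Adᴴ * (Pm σ d)ᴴ))
      = Pm σ d * (Ad * A) * (Pm σ d)ᴴ := by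
    rw [sandwich_mul hα he, t4]
  have hBM : ((starRingEnd ℂ α) • ((Pm τ e)ᴴ * Adᴴ * (Pm σ d)ᴴ)) * (α • (Pm σ d * Aᴴ * Pm τ e))
      = (Pm τ e)ᴴ * (A * Ad) * Pm τ e := by
    rw [sandwich_mul' hα hd, t3]
  refine ⟨?_, ?_, ?_, ?_⟩
  · rw [hMB, Matrix.mul_smul]
    congr 1
    simp only [Matrix.mul_assoc]
    rw [Pm_cancel' hd, ← Matrix.mul_assoc Ad A, ← Matrix.mul_assoc (Ad * A) Aᴴ, f1]
  · rw [hBM, Matrix.mul_smul]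
    congr 1
    simp only [Matrix.mul_assoc]
    rw [Pm_cancel he, ← Matrix.mul_assoc A Ad, ← Matrix.mul_assoc (A * Ad) Adᴴ, f2]
  · rw [hMB]
    simp only [Matrix.conjTranspose_mul, Matrix.conjTranspose_conjTranspose, h4,
      Matrix.mul_assoc]
    rw [← Matrix.mul_assoc Aᴴ Adᴴ, t4, Matrix.mul_assoc]
  · rw [hBM]
    simp only [Matrix.conjTranspose_mul, Matrix.conjTranspose_conjTranspose, h3,
      Matrix.mul_assoc]
    rw [← Matrix.mul_assoc Adᴴ Aᴴ, t3, Matrix.mul_assoc]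

lemma Jmis_transform (hd : ∀ i, ‖d i‖ = 1) (he : ∀ i, ‖e i‖ = 1) (hα : ‖α‖ = 1)
    (A Y : Matrix (Fin m) (Fin n) ℂ) (Ad : Matrix (Fin n) (Fin m) ℂ) :
    Jmis (α • (Pm σ d * Yᴴ * Pm τ e)) (α • (Pm σ d * Aᴴ * Pm τ e))
      ((starRingEnd ℂ α) • ((Pm τ e)ᴴ * Adᴴ * (Pm σ d)ᴴ)) = Jmis Y A Ad := by
  have e1 : α • (Pm σ d * Yᴴ * Pm τ e) - α • (Pm σ d * Aᴴ * Pm τ e)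
      = α • (Pm σ d * (Y - A)ᴴ * Pm τ e) := by
    rw [← smul_sub, ← Matrix.sub_mul, ← Matrix.mul_sub, Matrix.conjTranspose_sub]
  unfold Jmis
  rw [e1, sandwich_mul hα he, sandwich_mul' hα hd]
  have g1 : frobSq (Pm σ d * ((Y - A)ᴴ * Adᴴ) * (Pm σ d)ᴴ) = frobSq (Ad * (Y - A)) := by
    rw [frobSq_mul_PmT hd, frobSq_Pm_mul hd, ← Matrix.conjTranspose_mul,
      frobSq_conjTranspose]
  have g2 : frobSq ((Pm τ e)ᴴ * (Adᴴ * (Y - A)ᴴ) * Pm τ e) = frobSq ((Y - A) * Ad) := by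
    rw [frobSq_mul_Pm he, frobSq_PmT_mul he, ← Matrix.conjTranspose_mul,
      frobSq_conjTranspose]
  rw [g1, g2]
  ring

/-- if `X` minimizes `J(·;A)` over `F(A,S)`, then `f(X) = α P X* Q`
minimizes `J(·;f(A))` over `F(f(A), S')`, where `f(A) = α P A* Q`, `|α| = 1`, `P, Q` are
complex permutation matrices, and `S'` is the transformed pattern. -/
theorem stmt17 {m n : ℕ} (A X : Matrix (Fin m) (Fin n) ℂ) (Ad : Matrix (Fin n) (Fin m) ℂ)
    (hMP : IsMPInv A Ad) (S : Set (Fin m × Fin n))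
    (α : ℂ) (hα : ‖α‖ = 1)
    (P : Matrix (Fin n) (Fin n) ℂ) (hP : IsComplexPerm P)
    (Q : Matrix (Fin m) (Fin m) ℂ) (hQ : IsComplexPerm Q)
    (hXfeas : Feasible A X S)
    (hXmin : ∀ Y, Feasible A Y S → Jmis X A Ad ≤ Jmis Y A Ad) :
    ∀ B : Matrix (Fin m) (Fin n) ℂ, IsMPInv (α • (P * Aᴴ * Q)) B →
      Feasible (α • (P * Aᴴ * Q)) (α • (P * Xᴴ * Q)) (patTrans S P Q) ∧
      ∀ Y, Feasible (α • (P * Aᴴ * Q)) Y (patTrans S P Q) →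
        Jmis (α • (P * Xᴴ * Q)) (α • (P * Aᴴ * Q)) B ≤ Jmis Y (α • (P * Aᴴ * Q)) B := by
  obtain ⟨σ, d, hd, hPe⟩ := hP
  obtain ⟨τ, e, he, hQe⟩ := hQ
  have hP' : P = Pm σ d := hPe
  have hQ' : Q = Pm τ e := hQe
  subst hP'
  subst hQ'
  intro B hB
  have hB' : IsMPInv (α • (Pm σ d * Aᴴ * Pm τ e))
      ((starRingEnd ℂ α) • ((Pm τ e)ᴴ * Adᴴ * (Pm σ d)ᴴ)) := mp_transform hMP hd he hα
  have hBeq : B = (starRingEnd ℂ α) • ((Pm τ e)ᴴ * Adᴴ * (Pm σ d)ᴴ) := mpinv_unique hB hB'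
  subst hBeq
  refine ⟨feas_transform hd he hα A X S hXfeas, ?_⟩
  intro Y hY
  set Y0 : Matrix (Fin m) (Fin n) ℂ := α • (Pm τ e * Yᴴ * Pm σ d) with hY0def
  have hY0H : Y0ᴴ = (starRingEnd ℂ α) • ((Pm σ d)ᴴ * Y * (Pm τ e)ᴴ) := by
    rw [hY0def]
    simp [Matrix.conjTranspose_smul, Matrix.conjTranspose_mul, Matrix.mul_assoc]
  have hfg : α • (Pm σ d * Y0ᴴ * Pm τ e) = Y := by
    rw [hY0H, Matrix.mul_smul, Matrix.smul_mul, smul_smul, unit_mul_conj hα, one_smul]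
    simp only [Matrix.mul_assoc]
    rw [Pm_hermT_mul he, Matrix.mul_one, Pm_cancel hd]
  have hMH : (α • (Pm σ d * Aᴴ * Pm τ e))ᴴ
      = (starRingEnd ℂ α) • ((Pm τ e)ᴴ * A * (Pm σ d)ᴴ) := by
    simp [Matrix.conjTranspose_smul, Matrix.conjTranspose_mul, Matrix.mul_assoc]
  have eqA : α • (Pm τ e * (α • (Pm σ d * Aᴴ * Pm τ e))ᴴ * Pm σ d) = A := by
    rw [hMH, Matrix.mul_smul, Matrix.smul_mul, smul_smul, unit_mul_conj hα, one_smul]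
    simp only [Matrix.mul_assoc]
    rw [Pm_hermT_mul hd, Matrix.mul_one, Pm_cancel he]
  have eqS : patTrans (patTrans S (Pm σ d) (Pm τ e)) (Pm τ e) (Pm σ d) = S := by
    apply Set.ext
    rintro ⟨a, b⟩
    rw [mem_patTrans he hd, mem_patTrans hd he]
    simp
  have hY0feas : Feasible A Y0 S := by
    have h := feas_transform (σ := τ) (d := e) (τ := σ) (e := d) he hd hα (α • (Pm σ d * Aᴴ * Pm τ e)) Y
      (patTrans S (Pm σ d) (Pm τ e)) hY
    rw [eqA, eqS] at h
    exact h
  have j1 : Jmis (α • (Pm σ d * Xᴴ * Pm τ e)) (α • (Pm σ d * Aᴴ * Pm τ e))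
      ((starRingEnd ℂ α) • ((Pm τ e)ᴴ * Adᴴ * (Pm σ d)ᴴ)) = Jmis X A Ad :=
    Jmis_transform hd he hα A X Ad
  have j2 : Jmis (α • (Pm σ d * Y0ᴴ * Pm τ e)) (α • (Pm σ d * Aᴴ * Pm τ e))
      ((starRingEnd ℂ α) • ((Pm τ e)ᴴ * Adᴴ * (Pm σ d)ᴴ)) = Jmis Y0 A Ad :=
    Jmis_transform hd he hα A Y0 Ad
  rw [hfg] at j2
  rw [j1, j2]
  exact hXmin Y0 hY0feas
end
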